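/- arXiv:math/0701364 — 4 statements merged into one kernel-verified Lean document; each statement's English description precedes it below -/
import Mathlib

section
/- Let 𝒢 = (G, o, R_1, …, R_n) be a functional Menger system of rank n, let H ⊆ G be a quasi-stable l-unitary normal v-complex, and let U ⊆ G satisfy H ⊆ U, R_i U ⊆ H, R_i(G∖U) ⊆ G∖U for every i ∈ {1,…,n}, and the condition: x, y ∈ H and t(x) ∈ U imply t(y) ∈ U for all t ∈ T_n(G). Define E_H = {(x,y) : for all t ∈ T_n(G), t(x) ∈ H ⇔ t(y) ∈ H} and E_U = {(x,y) : for all t ∈ T_n(G), t(x) ∈ U ⇔ t(y) ∈ U}, and let E = E_H ∩ E_U. Then E is a v-regular equivalence relation on G, and H is an equivalence class of E. -/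
universe u

/-- A functional Menger system of rank `n`: an `(n+1)`-ary operation `o`
(written `x[y₁…yₙ]` in the paper) and `n` unary operations `R i`,
satisfying axioms A1–A7. -/
structure MengerSystem (n : ℕ) (G : Type u) where
  o : G → (Fin n → G) → G
  R : Fin n → G → G
  A1 : ∀ (x : G) (y z : Fin n → G),
    o (o x y) z = o x fun i => o (y i) z
  A2 : ∀ x : G, o x (fun i => R i x) = x
  A3 : ∀ (x : G) (u : Fin n → G) (i : Fin n) (z y : G),
    o (o x (Function.update u i z)) (fun j => R j y)
      = o x (Function.update u i (o z fun j => R j y))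
  A4 : ∀ (i : Fin n) (x y : G),
    R i (o x fun j => R j y) = o (R i x) fun j => R j y
  A5 : ∀ (x y z : G),
    o (o x fun j => R j y) (fun j => R j z)
      = o (o x fun j => R j z) (fun j => R j y)
  A6 : ∀ (i k : Fin n) (x : G) (y : Fin n → G),
    R i (o x y) = R i (o (R k x) y)
  A7 : ∀ (i : Fin n) (x : G) (y : Fin n → G),
    o (R i x) y = o (y i) fun j => R j (o x y)

namespace MengerSystem

variable {n : ℕ} {G : Type u}

/-- `T_n(G)`: the least set of transformations of `G` containing the identity and
closed under `t ↦ (x ↦ a[b̄|ᵢ t x])` and `t ↦ (x ↦ Rᵢ (t x))`. -/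
inductive IsTn (M : MengerSystem n G) : (G → G) → Prop
  | id : IsTn M id
  | op (t : G → G) (a : G) (b : Fin n → G) (i : Fin n) :
      IsTn M t → IsTn M fun x => M.o a (Function.update b i (t x))
  | proj (t : G → G) (i : Fin n) :
      IsTn M t → IsTn M fun x => M.R i (t x)

/-- quasi-stable: `x ∈ H → x[x…x] ∈ H`. -/
def QuasiStable (M : MengerSystem n G) (H : Set G) : Prop :=
  ∀ x ∈ H, M.o x (fun _ => x) ∈ H

/-- l-unitary: `x[y…y] ∈ H ∧ y ∈ H → x ∈ H`. -/
def LUnitary (M : MengerSystem n G) (H : Set G) : Prop :=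
  ∀ x y : G, M.o x (fun _ => y) ∈ H → y ∈ H → x ∈ H

/-- normal v-complex: `x, y ∈ H ∧ t x ∈ H → t y ∈ H` for all `t ∈ T_n(G)`. -/
def NormalVComplex (M : MengerSystem n G) (H : Set G) : Prop :=
  ∀ t : G → G, M.IsTn t → ∀ x ∈ H, ∀ y ∈ H, t x ∈ H → t y ∈ H

/-- stable: `x, y₁, …, yₙ ∈ H → x[y₁…yₙ] ∈ H`. -/
def Stable (M : MengerSystem n G) (H : Set G) : Prop :=
  ∀ (x : G) (y : Fin n → G), x ∈ H → (∀ i, y i ∈ H) → M.o x y ∈ H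

/-- v-unitary: `x[y₁…yₙ] ∈ H ∧ y₁, …, yₙ ∈ H → x ∈ H`. -/
def VUnitary (M : MengerSystem n G) (H : Set G) : Prop :=
  ∀ (x : G) (y : Fin n → G), M.o x y ∈ H → (∀ i, y i ∈ H) → x ∈ H

/-- l-ideal: `x[y₁…yₙ] ∈ H` whenever some `yᵢ ∈ H`. -/
def LIdeal (M : MengerSystem n G) (H : Set G) : Prop :=
  ∀ (x : G) (y : Fin n → G), (∃ i, y i ∈ H) → M.o x y ∈ H

/-- the order `x ≤ y ↔ x = y[R₁x…Rₙx]` (the relation ζ). -/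
def le (M : MengerSystem n G) (x y : G) : Prop :=
  x = M.o y fun i => M.R i x

/-- the quasi-order `x ⊏ y ↔ R₁x ≤ R₁y` (the relation χ). -/
def sub (M : MengerSystem n G) [NeZero n] (x y : G) : Prop :=
  M.le (M.R 0 x) (M.R 0 y)

/-- v-regular binary relation. -/
def VRegular (M : MengerSystem n G) (ρ : G → G → Prop) : Prop :=
  ∀ (z : G) (x y : Fin n → G), (∀ i, ρ (x i) (y i)) → ρ (M.o z x) (M.o z y)

end MengerSystem

/-- An `n`-place function on `A`: a partial map from `Aⁿ` to `A`. -/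
def NPlace (n : ℕ) (A : Type u) : Type u := (Fin n → A) → Part A

namespace NPlace

variable {n : ℕ} {A : Type u}

/-- Menger composition `f[g₁…gₙ]` of `n`-place functions. -/
def comp (f : NPlace n A) (g : Fin n → NPlace n A) : NPlace n A :=
  fun a =>
    (⟨∀ i, (g i a).Dom, fun h i => (g i a).get (h i)⟩ : Part (Fin n → A)).bind f

/-- `Rᵢ f`: same domain as `f`, value `(Rᵢ f)(a₁,…,aₙ) = aᵢ`. -/
def Ri (i : Fin n) (f : NPlace n A) : NPlace n A :=
  fun a => (f a).map fun _ => a i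

/-- Set-theoretic intersection of two `n`-place functions (as sets of pairs). -/
def inter (f g : NPlace n A) : NPlace n A :=
  fun a => ⟨(f a).Dom ∧ f a = g a, fun h => (f a).get h.1⟩

end NPlace

/-- A representation of a functional Menger system by `n`-place functions. -/
def MengerSystem.IsRep {n : ℕ} {G : Type u} (M : MengerSystem n G) {A : Type u}
    (P : G → NPlace n A) : Prop :=
  (∀ (x : G) (y : Fin n → G), P (M.o x y) = NPlace.comp (P x) fun i => P (y i)) ∧
  (∀ (i : Fin n) (x : G), P (M.R i x) = NPlace.Ri i (P x))

/-- A nonempty `H ⊆ G` is a stabilizer of `M` if there are a representation `P`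
on some set `A` and a point `a ∈ A` with `H = {g | P g (a,…,a) = a}`. -/
def MengerSystem.IsStabilizer {n : ℕ} {G : Type u} (M : MengerSystem n G)
    (H : Set G) : Prop :=
  ∃ (A : Type u) (P : G → NPlace n A) (a : A),
    M.IsRep P ∧ H = {g : G | a ∈ P g fun _ => a}

/-!
`E_H` and `E_U` are the relations "no `t ∈ T_n(G)` separates `x` from `y` with respect to `H`
(resp. `U`)". Such a relation is an equivalence, and since `T_n(G)` is closed under composition
with the one-coordinate translations `w ↦ z[ū|ᵢ w]`, changing the arguments of `z[x₁…xₙ]` one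
coordinate at a time shows that it is v-regular. The hypotheses on `H` and `U` say exactly that
any two elements of `H` are related, and `id ∈ T_n(G)` shows that an element related to a point
of `H` lies in `H`.
-/

theorem rel_apply_of_forall_update {ι α β : Type*} [Fintype ι] [DecidableEq ι]
    {r : α → α → Prop} {s : β → β → Prop} (hrefl : ∀ b, s b b)
    (htrans : ∀ {a b c}, s a b → s b c → s a c) (f : (ι → α) → β)
    (hf : ∀ (u : ι → α) (i : ι) (a b : α), r a b →
      s (f (Function.update u i a)) (f (Function.update u i b)))
    {x y : ι → α} (hxy : ∀ i, r (x i) (y i)) : s (f x) (f y) := by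
  suffices h : ∀ I : Finset ι, s (f x) (f (I.piecewise y x)) by
    simpa only [Finset.piecewise_univ] using h Finset.univ
  intro I
  induction I using Finset.induction_on with
  | empty => simpa only [Finset.piecewise_empty] using hrefl (f x)
  | insert i I hi ih =>
    have hxi : I.piecewise y x = Function.update (I.piecewise y x) i (x i) := by
      rw [← Finset.piecewise_eq_of_notMem I y x hi, Function.update_eq_self]
    refine htrans ih ?_
    rw [Finset.piecewise_insert]
    nth_rewrite 1 [hxi]
    exact hf _ i _ _ (hxy i)

theorem Equivalence.inf {α : Type*} {r s : α → α → Prop} (hr : Equivalence r)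
    (hs : Equivalence s) : Equivalence (r ⊓ s) where
  refl a := ⟨hr.refl a, hs.refl a⟩
  symm h := ⟨hr.symm h.1, hs.symm h.2⟩
  trans h₁ h₂ := ⟨hr.trans h₁.1 h₂.1, hs.trans h₁.2 h₂.2⟩

namespace MengerSystem

variable {n : ℕ} {G : Type u} {M : MengerSystem n G}

theorem IsTn.comp {t s : G → G} (ht : M.IsTn t) (hs : M.IsTn s) : M.IsTn (t ∘ s) := by
  induction ht with
  | id => exact hs
  | op _ a b i _ ih => exact IsTn.op _ a b i ih
  | proj _ i _ ih => exact IsTn.proj _ i ih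

theorem IsTn.update (z : G) (u : Fin n → G) (i : Fin n) :
    M.IsTn fun w => M.o z (Function.update u i w) :=
  IsTn.op _root_.id z u i IsTn.id

variable (M) in
def SyntacticRel (S : Set G) (x y : G) : Prop :=
  ∀ t : G → G, M.IsTn t → (t x ∈ S ↔ t y ∈ S)

theorem syntacticRel_equivalence (S : Set G) : Equivalence (M.SyntacticRel S) where
  refl _ _ _ := Iff.rfl
  symm h t ht := (h t ht).symm
  trans h₁ h₂ t ht := (h₁ t ht).trans (h₂ t ht)

theorem SyntacticRel.o_update {S : Set G} {a b : G} (h : M.SyntacticRel S a b) (z : G)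
    (u : Fin n → G) (i : Fin n) :
    M.SyntacticRel S (M.o z (Function.update u i a)) (M.o z (Function.update u i b)) :=
  fun _ ht => h _ (ht.comp (IsTn.update z u i))

theorem syntacticRel_vRegular (S : Set G) : M.VRegular (M.SyntacticRel S) :=
  fun z _ _ hxy =>
    rel_apply_of_forall_update (syntacticRel_equivalence S).refl
      (syntacticRel_equivalence S).trans (M.o z)
      (fun u i _ _ hab => hab.o_update z u i) hxy

theorem VRegular.inf {ρ σ : G → G → Prop} (hρ : M.VRegular ρ) (hσ : M.VRegular σ) :
    M.VRegular (ρ ⊓ σ) :=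
  fun z _ _ h => ⟨hρ z _ _ fun i => (h i).1, hσ z _ _ fun i => (h i).2⟩

theorem syntacticRel_of_mem {K S : Set G}
    (hKS : ∀ t : G → G, M.IsTn t → ∀ x ∈ K, ∀ y ∈ K, t x ∈ S → t y ∈ S)
    {x y : G} (hx : x ∈ K) (hy : y ∈ K) : M.SyntacticRel S x y :=
  fun t ht => ⟨hKS t ht x hx y hy, hKS t ht y hy x hx⟩

theorem SyntacticRel.mem_iff {S : Set G} {x y : G} (h : M.SyntacticRel S x y) :
    x ∈ S ↔ y ∈ S :=
  h _root_.id IsTn.id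

end MengerSystem

open MengerSystem in
theorem E_vRegular_equivalence_general {n : ℕ} {G : Type u} (M : MengerSystem n G)
    (H U : Set G) (hH : H.Nonempty)
    (hnc : M.NormalVComplex H)
    (hf1 : ∀ (x y : G) (t : G → G), M.IsTn t →
      x ∈ H → y ∈ H → t x ∈ U → t y ∈ U)
    (E : G → G → Prop)
    (hE : ∀ x y : G, E x y ↔
      ((∀ t : G → G, M.IsTn t → (t x ∈ H ↔ t y ∈ H)) ∧
       (∀ t : G → G, M.IsTn t → (t x ∈ U ↔ t y ∈ U)))) :
    Equivalence E ∧ M.VRegular E ∧ ∃ x : G, H = {y : G | E x y} := by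
  obtain rfl : E = M.SyntacticRel H ⊓ M.SyntacticRel U := by
    ext x y
    exact hE x y
  obtain ⟨x₀, hx₀⟩ := hH
  refine ⟨(syntacticRel_equivalence H).inf (syntacticRel_equivalence U),
    (syntacticRel_vRegular H).inf (syntacticRel_vRegular U), x₀, Set.ext fun y => ?_⟩
  refine ⟨fun hy => ⟨syntacticRel_of_mem hnc hx₀ hy, ?_⟩, fun hy => hy.1.mem_iff.mp hx₀⟩
  exact syntacticRel_of_mem (fun t ht x hx y hy => hf1 x y t ht hx hy) hx₀ hy

/-- The relation `E = E_H ∩ E_U` is a v-regular equivalence relation and `H` is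
one of its equivalence classes. -/
theorem E_vRegular_equivalence {n : ℕ} {G : Type u} (M : MengerSystem n G)
    (H U : Set G) (hH : H.Nonempty)
    (hqs : M.QuasiStable H) (hlu : M.LUnitary H) (hnc : M.NormalVComplex H)
    (hHU : H ⊆ U) (hRU : ∀ i : Fin n, ∀ x ∈ U, M.R i x ∈ H)
    (hRU' : ∀ i : Fin n, ∀ x ∈ Uᶜ, M.R i x ∈ Uᶜ)
    (hf1 : ∀ (x y : G) (t : G → G), M.IsTn t →
      x ∈ H → y ∈ H → t x ∈ U → t y ∈ U)
    (E : G → G → Prop)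
    (hE : ∀ x y : G, E x y ↔
      ((∀ t : G → G, M.IsTn t → (t x ∈ H ↔ t y ∈ H)) ∧
       (∀ t : G → G, M.IsTn t → (t x ∈ U ↔ t y ∈ U)))) :
    Equivalence E ∧ M.VRegular E ∧ ∃ x : G, H = {y : G | E x y} :=
  E_vRegular_equivalence_general M H U hH hnc hf1 E hE
end

section
/- Let (G, o) be a Menger algebra of rank n (an (n+1)-ary operation x[y_1…y_n] satisfying the superassociativity law A1), let E be a v-regular equivalence relation on G, and let W be either the empty set or an l-ideal of (G,o) that is an E-class. Then the simplest representation P_{(E,W)} is a representation of (G, o) by n-place functions: for all g, g_1,…,g_n ∈ G, P_{(E,W)}(g[g_1…g_n]) = P_{(E,W)}(g)[P_{(E,W)}(g_1)…P_{(E,W)}(g_n)] as n-place functions on A_E. -/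
universe u

namespace NPlace

variable {n : ℕ} {A : Type u}

/-- The stabilizer `H^a_Φ = {f ∈ Φ : f(a,…,a) = a}`. -/
def stab (Φ : Set (NPlace n A)) (a : A) : Set (NPlace n A) :=
  {f | f ∈ Φ ∧ a ∈ f fun _ => a}

/-- `U^a_Φ = {f ∈ Φ : (a,…,a) ∈ dom f}`. -/
def ustab (Φ : Set (NPlace n A)) (a : A) : Set (NPlace n A) :=
  {f | f ∈ Φ ∧ (f fun _ => a).Dom}

end NPlace

/-- A Menger algebra of rank `n`: an `(n+1)`-ary superassociative operation. -/
structure MengerAlg (n : ℕ) (G : Type u) where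
  o : G → (Fin n → G) → G
  A1 : ∀ (x : G) (y z : Fin n → G), o (o x y) z = o x fun i => o (y i) z

/-- The equivalence class of `x` modulo the relation `E`. -/
def eClass {G : Type u} (E : G → G → Prop) (x : G) : Set G := {y | E x y}

/-- The index set `A_E`: `E`-classes different from `W`. -/
def AE {G : Type u} (E : G → G → Prop) (W : Set G) : Type u :=
  {S : Set G // (∃ x : G, S = eClass E x) ∧ S ≠ W}

/-- The set `g[H_{a₁}…H_{aₙ}]` of all values `g[h₁…hₙ]` with `hᵢ ∈ H_{aᵢ}`. -/
def MengerAlg.im {n : ℕ} {G : Type u} (M : MengerAlg n G) {E : G → G → Prop}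
    {W : Set G} (g : G) (a : Fin n → AE E W) : Set G :=
  {z | ∃ h : Fin n → G, (∀ i, h i ∈ (a i).1) ∧ z = M.o g h}

/-!
An element `b` of `P(g)(a)` is an `E`-class containing `g[H_{a₁}…H_{aₙ}]`; since distinct classes
are disjoint, containment in a class other than `W` already forces disjointness from `W`. By
superassociativity `g[gs][h] = g[gs₁[h]…gsₙ[h]]`, so `g[gs][H_a]` lies in `g[P(gs₁)(a)…P(gsₙ)(a)]`,
which gives `P(g)[P(gs)] ⊆ P(g[gs])`. Conversely, `v`-regularity makes `g[P(gs₁)(a)…P(gsₙ)(a)]` lie in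
the class of a single element `g[gs][h₀]`, and the `l`-ideal property of `W` makes `P(gsᵢ)(a)` defined
whenever `P(g[gs])(a)` is.
-/

theorem NPlace.mem_comp {n : ℕ} {A : Type u} (f : NPlace n A) (g : Fin n → NPlace n A)
    (a : Fin n → A) (b : A) :
    b ∈ NPlace.comp f g a ↔ ∃ c : Fin n → A, (∀ i, c i ∈ g i a) ∧ b ∈ f c := by
  refine Part.mem_bind_iff.trans ?_
  simp only [Part.mem_mk_iff]
  constructor
  · rintro ⟨c, ⟨hdom, rfl⟩, hb⟩
    exact ⟨_, fun i => Part.get_mem (hdom i), hb⟩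
  · rintro ⟨c, hc, hb⟩
    refine ⟨c, ⟨fun i => Part.dom_iff_mem.2 ⟨_, hc i⟩, ?_⟩, hb⟩
    exact funext fun i => Part.get_eq_of_mem (hc i) _

def MengerAlg.IsLIdeal {n : ℕ} {G : Type u} (M : MengerAlg n G) (W : Set G) : Prop :=
  ∀ (x : G) (y : Fin n → G), (∃ i, y i ∈ W) → M.o x y ∈ W

theorem MengerAlg.isLIdeal_empty {n : ℕ} {G : Type u} (M : MengerAlg n G) : M.IsLIdeal ∅ :=
  fun _ _ ⟨_, hi⟩ => hi

namespace AE

variable {G : Type u} {E : G → G → Prop} {W : Set G}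

theorem nonempty (hE : Equivalence E) (c : AE E W) : c.1.Nonempty := by
  obtain ⟨S, ⟨x, rfl⟩, _⟩ := c
  exact ⟨x, hE.refl x⟩

theorem rel_of_mem (hE : Equivalence E) (c : AE E W) {y z : G} (hy : y ∈ c.1) (hz : z ∈ c.1) :
    E y z := by
  obtain ⟨S, ⟨x, rfl⟩, _⟩ := c
  exact hE.trans (hE.symm hy) hz

theorem mem_of_rel (hE : Equivalence E) (c : AE E W) {y z : G} (hy : y ∈ c.1) (hyz : E y z) :
    z ∈ c.1 := by
  obtain ⟨S, ⟨x, rfl⟩, _⟩ := c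
  exact hE.trans hy hyz

theorem disjoint (hE : Equivalence E) (hW : W = ∅ ∨ ∃ w, W = eClass E w) (c : AE E W) :
    Disjoint c.1 W := by
  obtain ⟨S, ⟨x, rfl⟩, hne⟩ := c
  rcases hW with rfl | ⟨w, rfl⟩
  · exact Set.disjoint_empty _
  refine Set.disjoint_left.2 fun z hxz hwz => hne (Set.ext fun y => ?_)
  have hxw : E x w := hE.trans hxz (hE.symm hwz)
  exact ⟨hE.trans (hE.symm hxw), hE.trans hxw⟩

end AE

namespace MengerAlg

variable {n : ℕ} {G : Type u} (M : MengerAlg n G) {E : G → G → Prop} {W : Set G}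

theorem im_comp_subset {g : G} {gs : Fin n → G} {a c : Fin n → AE E W}
    (hc : ∀ i, M.im (gs i) a ⊆ (c i).1) : M.im (M.o g gs) a ⊆ M.im g c := by
  rintro _ ⟨h, hh, rfl⟩
  exact ⟨fun i => M.o (gs i) h, fun i => hc i ⟨h, hh, rfl⟩, M.A1 g gs h⟩

/-- All of `g[H_{c₁}…H_{cₙ}]` is `E`-related to one element `g[gs][h₀]` of `g[gs][H_a]`. -/
theorem im_subset_of_im_comp_subset (hE : Equivalence E)
    (hreg : ∀ (z : G) (x y : Fin n → G), (∀ i, E (x i) (y i)) → E (M.o z x) (M.o z y))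
    {g : G} {gs : Fin n → G} {a c : Fin n → AE E W} {b : AE E W}
    (hc : ∀ i, M.im (gs i) a ⊆ (c i).1) (hb : M.im (M.o g gs) a ⊆ b.1) :
    M.im g c ⊆ b.1 := by
  choose h₀ hh₀ using fun i => (a i).nonempty hE
  have hbase : M.o (M.o g gs) h₀ ∈ b.1 := hb ⟨h₀, hh₀, rfl⟩
  rintro _ ⟨k, hk, rfl⟩
  refine (b.mem_of_rel hE hbase) (hE.symm ?_)
  rw [M.A1]
  exact hreg g k _ fun i => (c i).rel_of_mem hE (hk i) (hc i ⟨h₀, hh₀, rfl⟩)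

theorem im_inter_eq_empty_of_im_comp (hW : M.IsLIdeal W) {g : G} {gs : Fin n → G}
    {a : Fin n → AE E W} (hgs : M.im (M.o g gs) a ∩ W = ∅) (i : Fin n) :
    M.im (gs i) a ∩ W = ∅ := by
  refine Set.eq_empty_of_forall_notMem ?_
  rintro _ ⟨⟨h, hh, rfl⟩, hzW⟩
  have hmem : M.o (M.o g gs) h ∈ W := by
    rw [M.A1]
    exact hW g _ ⟨i, hzW⟩
  exact hgs.subset ⟨⟨h, hh, rfl⟩, hmem⟩

end MengerAlg

section SimplestRep

variable {n : ℕ} {G : Type u} {M : MengerAlg n G} {E : G → G → Prop} {W : Set G}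
  {P : G → NPlace n (AE E W)}

theorem mem_simplestRep_iff (hE : Equivalence E) (hW : W = ∅ ∨ ∃ w, W = eClass E w)
    (hP : ∀ (g : G) (a : Fin n → AE E W) (b : AE E W),
      b ∈ P g a ↔ (M.im g a ∩ W = ∅ ∧ M.im g a ⊆ b.1))
    {g : G} {a : Fin n → AE E W} {b : AE E W} :
    b ∈ P g a ↔ M.im g a ⊆ b.1 := by
  rw [hP]
  refine ⟨And.right, fun hb => ⟨?_, hb⟩⟩
  exact Set.disjoint_iff_inter_eq_empty.1 ((b.disjoint hE hW).mono_left hb)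

end SimplestRep

/-- The simplest representation `P_{(E,W)}` is a representation of `(G, o)` by
`n`-place functions: `P(g[g₁…gₙ]) = P(g)[P(g₁)…P(gₙ)]`. -/
theorem simplestRep_isRep {n : ℕ} {G : Type u} (M : MengerAlg n G)
    (E : G → G → Prop) (hE : Equivalence E)
    (hreg : ∀ (z : G) (x y : Fin n → G), (∀ i, E (x i) (y i)) →
      E (M.o z x) (M.o z y))
    (W : Set G)
    (hW : W = ∅ ∨
      ((∀ (x : G) (y : Fin n → G), (∃ i, y i ∈ W) → M.o x y ∈ W) ∧
        ∃ w : G, W = eClass E w))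
    (P : G → NPlace n (AE E W))
    (hP : ∀ (g : G) (a : Fin n → AE E W),
      ((P g a).Dom ↔ M.im g a ∩ W = ∅) ∧
      ∀ b : AE E W, b ∈ P g a ↔ (M.im g a ∩ W = ∅ ∧ M.im g a ⊆ b.1)) :
    ∀ (g : G) (gs : Fin n → G),
      P (M.o g gs) = NPlace.comp (P g) fun i => P (gs i) := by
  have hWideal : M.IsLIdeal W := hW.elim (fun h => h ▸ M.isLIdeal_empty) And.left
  have hWclass : W = ∅ ∨ ∃ w, W = eClass E w := hW.imp_right And.right
  have hmem : ∀ g a b, b ∈ P g a ↔ M.im g a ⊆ b.1 := fun g a b =>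
    mem_simplestRep_iff hE hWclass (fun g a => (hP g a).2)
  intro g gs
  funext a
  ext b
  rw [NPlace.mem_comp]
  constructor
  · intro hb
    have hdisj : M.im (M.o g gs) a ∩ W = ∅ := (hP _ a).1.1 (Part.dom_iff_mem.2 ⟨b, hb⟩)
    have hdom : ∀ i, (P (gs i) a).Dom := fun i =>
      (hP _ a).1.2 (M.im_inter_eq_empty_of_im_comp hWideal hdisj i)
    refine ⟨fun i => (P (gs i) a).get (hdom i), fun i => Part.get_mem (hdom i), ?_⟩
    exact (hmem _ _ _).2 <| M.im_subset_of_im_comp_subset hE hreg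
      (fun i => (hmem _ _ _).1 (Part.get_mem (hdom i))) ((hmem _ _ _).1 hb)
  · rintro ⟨c, hc, hb⟩
    exact (hmem _ _ _).2 <|
      (M.im_comp_subset fun i => (hmem _ _ _).1 (hc i)).trans ((hmem _ _ _).1 hb)
end

section
/- Let 𝒢 = (G, o, R_1, …, R_n) be a functional Menger system of rank n, let H ⊆ G be a quasi-stable l-unitary normal v-complex, and let U ⊆ G satisfy H ⊆ U, R_i U ⊆ H, R_i(G∖U) ⊆ G∖U for every i ∈ {1,…,n}, and the condition: x, y ∈ H and t(x) ∈ U imply t(y) ∈ U for all t ∈ T_n(G). Let E = E_H ∩ E_U, where E_X = {(x,y) : for all t ∈ T_n(G), t(x) ∈ X ⇔ t(y) ∈ X}, let W = G∖U, and let a ∈ A_E be the index of the E-class H (i.e., H_a = H). Then for every g ∈ G: g ∈ H if and only if P_{(E,W)}(g)(a,…,a) = a. -/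
universe u

/-- The set `g[H_{a₁}…H_{aₙ}]` of all values `g[h₁…hₙ]` with `hᵢ ∈ H_{aᵢ}`. -/
def MengerSystem.im {n : ℕ} {G : Type u} (M : MengerSystem n G)
    {E : G → G → Prop} {W : Set G} (g : G) (a : Fin n → AE E W) : Set G :=
  {z | ∃ h : Fin n → G, (∀ i, h i ∈ (a i).1) ∧ z = M.o g h}

/-!
A quasi-stable normal v-complex `H` is stable: starting from `g[g…g] ∈ H`, the
arguments can be replaced one at a time by arbitrary elements of `H`, since each
replacement is an instance of the transformation `x ↦ g[c̄|ᵢ x] ∈ T_n(G)`.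
Hence `g ∈ H` forces `g[H…H] ⊆ H ⊆ U`, i.e. `P(g)(a,…,a) = a`. Conversely, if
`g[H…H] ⊆ H` then `g[x…x] ∈ H` for any `x ∈ H` (the class `H` is nonempty,
`E` being reflexive), and l-unitarity gives `g ∈ H`.
-/

namespace MengerSystem

variable {n : ℕ} {G : Type u}

theorem isTn_update (M : MengerSystem n G) (g : G) (c : Fin n → G) (i : Fin n) :
    M.IsTn fun x => M.o g (Function.update c i x) :=
  IsTn.op id g c i IsTn.id

theorem QuasiStable.stable_of_normalVComplex {M : MengerSystem n G} {H : Set G}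
    (hqs : M.QuasiStable H) (hnc : M.NormalVComplex H) : M.Stable H := by
  intro g h hg hh
  have hpiece : ∀ s : Finset (Fin n), M.o g (s.piecewise h fun _ => g) ∈ H := by
    intro s
    induction s using Finset.induction_on with
    | empty => simpa only [Finset.piecewise_empty] using hqs g hg
    | insert i s hi ih =>
      have hfix : Function.update (s.piecewise h fun _ => g) i g = s.piecewise h fun _ => g :=
        Function.update_eq_self_iff.2 (Finset.piecewise_eq_of_notMem s h (fun _ => g) hi).symm
      rw [Finset.piecewise_insert]
      exact hnc _ (M.isTn_update g _ i) g hg (h i) (hh i) (by rw [hfix]; exact ih)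
  simpa only [Finset.piecewise_univ] using hpiece Finset.univ

variable {E : G → G → Prop} {W : Set G}

theorem Stable.im_subset {M : MengerSystem n G} {H : Set G} (hs : M.Stable H) {g : G}
    (hg : g ∈ H) {a : Fin n → AE E W} (ha : ∀ i, (a i).1 ⊆ H) : M.im g a ⊆ H := by
  rintro _ ⟨h, hh, rfl⟩
  exact hs g h hg fun i => ha i (hh i)

theorem o_const_mem_im (M : MengerSystem n G) {g x : G} {a : AE E W} (hx : x ∈ a.1) :
    M.o g (fun _ => x) ∈ M.im g fun _ => a :=
  ⟨fun _ => x, fun _ => hx, rfl⟩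

end MengerSystem

theorem AE.exists_mem {G : Type u} {E : G → G → Prop} {W : Set G} (hE : ∀ x, E x x)
    (a : AE E W) : ∃ x, x ∈ a.1 := by
  obtain ⟨x, hx⟩ := a.2.1
  exact ⟨x, hx ▸ hE x⟩

theorem simplestRep_stab_general {n : ℕ} {G : Type u} (M : MengerSystem n G)
    (H U : Set G)
    (hqs : M.QuasiStable H) (hlu : M.LUnitary H) (hnc : M.NormalVComplex H)
    (hHU : H ⊆ U)
    (E : G → G → Prop)
    (hE : ∀ x y : G, E x y ↔
      ((∀ t : G → G, M.IsTn t → (t x ∈ H ↔ t y ∈ H)) ∧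
       (∀ t : G → G, M.IsTn t → (t x ∈ U ↔ t y ∈ U))))
    (P : G → NPlace n (AE E Uᶜ))
    (hP : ∀ (g : G) (a : Fin n → AE E Uᶜ),
      ((P g a).Dom ↔ M.im g a ∩ Uᶜ = ∅) ∧
      ∀ b : AE E Uᶜ, b ∈ P g a ↔ (M.im g a ∩ Uᶜ = ∅ ∧ M.im g a ⊆ b.1))
    (a : AE E Uᶜ) (ha : a.1 = H) :
    ∀ g : G, g ∈ H ↔ a ∈ P g fun _ => a := by
  have hErefl : ∀ x, E x x := fun x => (hE x x).2 ⟨fun _ _ => Iff.rfl, fun _ _ => Iff.rfl⟩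
  have hstab := hqs.stable_of_normalVComplex hnc
  intro g
  rw [(hP g fun _ => a).2 a, ha]
  constructor
  · intro hg
    have him := hstab.im_subset hg fun _ => ha.le
    exact ⟨Set.disjoint_compl_right_iff_subset.2 (him.trans hHU) |>.inter_eq, him⟩
  · rintro ⟨-, him⟩
    obtain ⟨x, hx⟩ := a.exists_mem hErefl
    exact hlu g x (him (M.o_const_mem_im hx)) (ha ▸ hx)

/-- For `E = E_H ∩ E_U`, `W = G∖U` and `a` the index of the `E`-class `H`:
`g ∈ H ↔ P_{(E,W)}(g)(a,…,a) = a`. -/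
theorem simplestRep_stab {n : ℕ} {G : Type u} (M : MengerSystem n G)
    (H U : Set G)
    (hqs : M.QuasiStable H) (hlu : M.LUnitary H) (hnc : M.NormalVComplex H)
    (hHU : H ⊆ U) (hRU : ∀ i : Fin n, ∀ x ∈ U, M.R i x ∈ H)
    (hRU' : ∀ i : Fin n, ∀ x ∈ Uᶜ, M.R i x ∈ Uᶜ)
    (hf1 : ∀ (x y : G) (t : G → G), M.IsTn t →
      x ∈ H → y ∈ H → t x ∈ U → t y ∈ U)
    (E : G → G → Prop)
    (hE : ∀ x y : G, E x y ↔
      ((∀ t : G → G, M.IsTn t → (t x ∈ H ↔ t y ∈ H)) ∧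
       (∀ t : G → G, M.IsTn t → (t x ∈ U ↔ t y ∈ U))))
    (P : G → NPlace n (AE E Uᶜ))
    (hP : ∀ (g : G) (a : Fin n → AE E Uᶜ),
      ((P g a).Dom ↔ M.im g a ∩ Uᶜ = ∅) ∧
      ∀ b : AE E Uᶜ, b ∈ P g a ↔ (M.im g a ∩ Uᶜ = ∅ ∧ M.im g a ⊆ b.1))
    (a : AE E Uᶜ) (ha : a.1 = H) :
    ∀ g : G, g ∈ H ↔ a ∈ P g fun _ => a :=
  simplestRep_stab_general M H U hqs hlu hnc hHU E hE P hP a ha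
end

section
/- Let 𝒢 = (G, o, R_1, …, R_n) be a functional Menger system of rank n and let H ⊆ G be a quasi-stable l-unitary normal v-complex with R_i H ⊆ H for every i ∈ {1,…,n}. Then for every m ∈ ℕ and every i ∈ {1,…,n}: R_i(C_H^m(H)) ⊆ H. Consequently R_i(C_H[H]) ⊆ H. -/
/-!
Normality applied to `z ↦ x[ū|ᵢ z]` lets one exchange the arguments of `x[ū] ∈ H` lying in `H`
for other elements of `H`, one coordinate at a time; hence `H` is stable (start from `x[x…x]`)
and v-unitary (end at `x[y…y]`). Induct on `m`. For `c ∈ C_H(X)` witnessed by `a, b, t`, all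
`Rⱼ(t a)` lie in `H`: if `a ≤ b` then `t a = (t b)[R₁a…Rₙa]`, because `t` commutes with right
multiplication by `R`-tuples, and stability applies; if `a, b ∈ H`, normality applies to
`Rⱼ ∘ t`. From `t a ⊏ c`, i.e. `R₁(t a) = (R₁c)[R₁R₁(t a)…]`, v-unitarity gives `R₁c ∈ H`, and
then `Rᵢ(R₁c) = (Rᵢc)[R₁R₁c…RₙR₁c]` gives `Rᵢc ∈ H`.
-/

universe u

/-- The operator `C_H`: `c ∈ C_H(X)` iff there are `a, b, t` with
`(a ≤ b ∨ a, b ∈ H)`, `t a ⊏ c`, `a ∈ X` and `t b ∈ X`. -/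
def MengerSystem.CH {n : ℕ} {G : Type u} [NeZero n] (M : MengerSystem n G)
    (H X : Set G) : Set G :=
  {c | ∃ (a b : G) (t : G → G), M.IsTn t ∧ (M.le a b ∨ (a ∈ H ∧ b ∈ H)) ∧
    M.sub (t a) c ∧ a ∈ X ∧ t b ∈ X}

/-- Iterates `C_H^m(X)`. -/
def MengerSystem.CHiter {n : ℕ} {G : Type u} [NeZero n] (M : MengerSystem n G)
    (H X : Set G) : ℕ → Set G
  | 0 => X
  | m + 1 => M.CH H (M.CHiter H X m)

/-- `C_H[X] = ⋃ₘ C_H^m(X)`. -/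
def MengerSystem.CHcl {n : ℕ} {G : Type u} [NeZero n] (M : MengerSystem n G)
    (H X : Set G) : Set G :=
  ⋃ m : ℕ, M.CHiter H X m

namespace MengerSystem

variable {n : ℕ} {G : Type u} {M : MengerSystem n G} {H : Set G}

theorem IsTn.map_o_R {t : G → G} (ht : M.IsTn t) (x y : G) :
    t (M.o x fun j => M.R j y) = M.o (t x) fun j => M.R j y := by
  induction ht with
  | id => rfl
  | op t a b i _ ih => simp only [ih]; exact (M.A3 a b i (t x) y).symm
  | proj t i _ ih => simp only [ih]; exact M.A4 i (t x) y

theorem R_R (M : MengerSystem n G) (i k : Fin n) (x : G) :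
    M.R i (M.R k x) = M.o (M.R i x) fun j => M.R j (M.R k x) := by
  conv_lhs => rw [← M.A2 (M.R k x)]
  rw [← M.A6 i k x, M.A4]

namespace NormalVComplex

theorem o_update_mem (hnc : M.NormalVComplex H) {x : G} {u : Fin n → G} {i : Fin n} {z : G}
    (hx : M.o x u ∈ H) (hu : u i ∈ H) (hz : z ∈ H) : M.o x (Function.update u i z) ∈ H := by
  refine hnc _ (IsTn.op id x u i IsTn.id) (u i) hu z hz ?_
  simpa only [id, Function.update_eq_self] using hx

theorem o_mem_of_o_mem (hnc : M.NormalVComplex H) {x : G} {u v : Fin n → G}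
    (hu : ∀ i, u i ∈ H) (hv : ∀ i, v i ∈ H) (hx : M.o x u ∈ H) : M.o x v ∈ H := by
  have hmem : ∀ (s : Finset (Fin n)) i, s.piecewise v u i ∈ H := fun s i => by
    by_cases h : i ∈ s <;> simp [h, hu, hv]
  suffices ∀ s : Finset (Fin n), M.o x (s.piecewise v u) ∈ H by
    simpa using this Finset.univ
  intro s
  induction s using Finset.induction_on with
  | empty => simpa using hx
  | insert j s _ ih =>
    rw [Finset.piecewise_insert]
    exact hnc.o_update_mem ih (hmem s j) (hv j)

theorem stable (hnc : M.NormalVComplex H) (hqs : M.QuasiStable H) : M.Stable H :=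
  fun x _ hx hy => hnc.o_mem_of_o_mem (fun _ => hx) hy (hqs x hx)

theorem vUnitary [NeZero n] (hnc : M.NormalVComplex H) (hlu : M.LUnitary H) :
    M.VUnitary H :=
  fun x y hxy hy => hlu x (y 0) (hnc.o_mem_of_o_mem hy (fun _ => hy 0) hxy) (hy 0)

end NormalVComplex

variable [NeZero n]

theorem R_mem_of_sub (hvu : M.VUnitary H) (hRH : ∀ i, Set.MapsTo (M.R i) H H) {w c : G}
    (hw : M.R 0 w ∈ H) (hwc : M.sub w c) (i : Fin n) : M.R i c ∈ H := by
  have hc : M.R 0 c ∈ H :=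
    hvu (M.R 0 c) (fun j => M.R j (M.R 0 w)) (hwc ▸ hw) fun j => hRH j hw
  refine hvu (M.R i c) (fun j => M.R j (M.R 0 c)) ?_ fun j => hRH j hc
  rw [← M.R_R i 0 c]
  exact hRH i hc

theorem mapsTo_R_CH (hst : M.Stable H) (hnc : M.NormalVComplex H) (hvu : M.VUnitary H)
    (hRH : ∀ i, Set.MapsTo (M.R i) H H) {X : Set G} (hX : ∀ i, Set.MapsTo (M.R i) X H)
    (i : Fin n) : Set.MapsTo (M.R i) (M.CH H X) H := by
  rintro c ⟨a, b, t, ht, hab | ⟨haH, hbH⟩, hsub, haX, htbX⟩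
  · have hta : t a = M.o (t b) fun j => M.R j a := by
      conv_lhs => rw [hab]
      exact ht.map_o_R b a
    refine R_mem_of_sub hvu hRH ?_ hsub i
    rw [hta, M.A4]
    exact hst _ _ (hX 0 htbX) fun k => hX k haX
  · exact R_mem_of_sub hvu hRH (hnc _ (IsTn.proj t 0 ht) b hbH a haH (hX 0 htbX)) hsub i

end MengerSystem

/-- For a quasi-stable l-unitary normal v-complex `H` with `Rᵢ H ⊆ H`:
`Rᵢ (C_H^m(H)) ⊆ H` for every `m`, and consequently `Rᵢ (C_H[H]) ⊆ H`. -/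
theorem Ri_CHiter_subset {n : ℕ} {G : Type u} [NeZero n] (M : MengerSystem n G)
    (H : Set G)
    (hqs : M.QuasiStable H) (hlu : M.LUnitary H) (hnc : M.NormalVComplex H)
    (hRH : ∀ i : Fin n, ∀ x ∈ H, M.R i x ∈ H) :
    (∀ (m : ℕ) (i : Fin n), ∀ x ∈ M.CHiter H H m, M.R i x ∈ H) ∧
    (∀ i : Fin n, ∀ x ∈ M.CHcl H H, M.R i x ∈ H) := by
  have hst := hnc.stable hqs
  have hvu := hnc.vUnitary hlu
  have hiter : ∀ (m : ℕ) (i : Fin n), Set.MapsTo (M.R i) (M.CHiter H H m) H := by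
    intro m
    induction m with
    | zero => exact hRH
    | succ m ih => exact M.mapsTo_R_CH hst hnc hvu hRH ih
  refine ⟨hiter, fun i x hx => ?_⟩
  obtain ⟨m, hm⟩ := Set.mem_iUnion.mp hx
  exact hiter m i hm
end
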